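/- arXiv:1503.02268 — 2 statements merged into one kernel-verified Lean document; each statement's English description precedes it below -/
import Mathlib

section
/- For an admissible curve γ(x) = (x, y(x), z(x)) in G³₁, with curvature κ(x) = √|y''(x)² − z''(x)²| and torsion τ(x) = (y''(x)·z'''(x) − y'''(x)·z''(x))/κ(x)², the curve α(u) = (u, (u/6)(-cosh(2 ln u) + 2 sinh(2 ln u)), (u/6)(2 cosh(2 ln u) − sinh(2 ln u))) defined for u > 0 satisfies κ(u) = 1/u and τ(u) = -2/u. -/
noncomputable def yα : ℝ → ℝ := fun u =>
  u / 6 * (-(Real.cosh (2 * Real.log u)) + 2 * Real.sinh (2 * Real.log u))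

noncomputable def zα : ℝ → ℝ := fun u =>
  u / 6 * (2 * Real.cosh (2 * Real.log u) - Real.sinh (2 * Real.log u))

/-!
Since `cosh (2 ln u) = (u² + u⁻²)/2` and `sinh (2 ln u) = (u² - u⁻²)/2`, the components of `α`
are Laurent polynomials on `u > 0`: `y = u³/12 - 1/(4u)` and `z = u³/12 + 1/(4u)`.
Hence `y'' = u/2 - 1/(2u³)` and `z'' = u/2 + 1/(2u³)`, so `y''² - z''² = -1/u²`, and the
torsion numerator `y''z''' - y'''z''` equals `-2/u³`.
-/

open Real Set

theorem eqOn_deriv_of_eqOn_of_hasDerivAt {f g g' : ℝ → ℝ} {s : Set ℝ} (hs : IsOpen s)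
    (hfg : EqOn f g s) (hg : ∀ x ∈ s, HasDerivAt g (g' x) x) : EqOn (deriv f) g' s :=
  fun x hx => (hfg.deriv hs hx).trans (hg x hx).deriv

section Laurent

variable {a b x : ℝ} {f : ℝ → ℝ} {s : Set ℝ}

theorem hasDerivAt_mul_cube_add_div (hx : x ≠ 0) :
    HasDerivAt (fun x => a * x ^ 3 + b / x) (3 * a * x ^ 2 - b / x ^ 2) x := by
  refine (((hasDerivAt_pow 3 x).const_mul a).fun_add
    ((hasDerivAt_const x b).fun_div (hasDerivAt_id' x) hx)).congr_deriv ?_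
  field_simp
  ring

theorem hasDerivAt_mul_sq_sub_div_sq (hx : x ≠ 0) :
    HasDerivAt (fun x => 3 * a * x ^ 2 - b / x ^ 2) (6 * a * x + 2 * b / x ^ 3) x := by
  refine (((hasDerivAt_pow 2 x).const_mul (3 * a)).fun_sub
    ((hasDerivAt_const x b).fun_div (hasDerivAt_pow 2 x) (pow_ne_zero 2 hx))).congr_deriv ?_
  field_simp
  ring

theorem hasDerivAt_mul_add_div_cube (hx : x ≠ 0) :
    HasDerivAt (fun x => 6 * a * x + 2 * b / x ^ 3) (6 * a - 6 * b / x ^ 4) x := by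
  refine (((hasDerivAt_id' x).const_mul (6 * a)).fun_add
    ((hasDerivAt_const x (2 * b)).fun_div (hasDerivAt_pow 3 x) (pow_ne_zero 3 hx))).congr_deriv ?_
  field_simp
  ring

theorem eqOn_deriv_deriv_of_eqOn_mul_cube_add_div (hs : IsOpen s) (h0 : (0 : ℝ) ∉ s)
    (hf : EqOn f (fun x => a * x ^ 3 + b / x) s) :
    EqOn (deriv (deriv f)) (fun x => 6 * a * x + 2 * b / x ^ 3) s :=
  eqOn_deriv_of_eqOn_of_hasDerivAt hs
    (eqOn_deriv_of_eqOn_of_hasDerivAt hs hf fun _ hx =>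
      hasDerivAt_mul_cube_add_div (hx.ne_of_notMem h0))
    fun _ hx => hasDerivAt_mul_sq_sub_div_sq (hx.ne_of_notMem h0)

theorem eqOn_deriv_deriv_deriv_of_eqOn_mul_cube_add_div (hs : IsOpen s) (h0 : (0 : ℝ) ∉ s)
    (hf : EqOn f (fun x => a * x ^ 3 + b / x) s) :
    EqOn (deriv (deriv (deriv f))) (fun x => 6 * a - 6 * b / x ^ 4) s :=
  eqOn_deriv_of_eqOn_of_hasDerivAt hs (eqOn_deriv_deriv_of_eqOn_mul_cube_add_div hs h0 hf)
    fun _ hx => hasDerivAt_mul_add_div_cube (hx.ne_of_notMem h0)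

end Laurent

theorem Real.cosh_two_mul_log {x : ℝ} (hx : 0 < x) :
    cosh (2 * log x) = (x ^ 2 + (x ^ 2)⁻¹) / 2 := by
  rw [← cosh_log (pow_pos hx 2), log_pow, Nat.cast_ofNat]

theorem Real.sinh_two_mul_log {x : ℝ} (hx : 0 < x) :
    sinh (2 * log x) = (x ^ 2 - (x ^ 2)⁻¹) / 2 := by
  rw [← sinh_log (pow_pos hx 2), log_pow, Nat.cast_ofNat]

theorem yα_eqOn : EqOn yα (fun x => 1 / 12 * x ^ 3 + -(1 / 4) / x) (Ioi 0) := by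
  intro x (hx : 0 < x)
  simp only [yα, cosh_two_mul_log hx, sinh_two_mul_log hx]
  field_simp
  ring

theorem zα_eqOn : EqOn zα (fun x => 1 / 12 * x ^ 3 + 1 / 4 / x) (Ioi 0) := by
  intro x (hx : 0 < x)
  simp only [zα, cosh_two_mul_log hx, sinh_two_mul_log hx]
  field_simp
  ring

theorem stmt2 (u : ℝ) (hu : 0 < u) :
    Real.sqrt |(deriv (deriv yα) u) ^ 2 - (deriv (deriv zα) u) ^ 2| = 1 / u ∧
    (deriv (deriv yα) u * deriv (deriv (deriv zα)) u -
        deriv (deriv (deriv yα)) u * deriv (deriv zα) u) /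
      (Real.sqrt |(deriv (deriv yα) u) ^ 2 - (deriv (deriv zα) u) ^ 2|) ^ 2 = -2 / u := by
  have h0 : (0 : ℝ) ∉ Ioi 0 := self_notMem_Ioi
  have hy2 := eqOn_deriv_deriv_of_eqOn_mul_cube_add_div isOpen_Ioi h0 yα_eqOn hu
  have hz2 := eqOn_deriv_deriv_of_eqOn_mul_cube_add_div isOpen_Ioi h0 zα_eqOn hu
  have hy3 := eqOn_deriv_deriv_deriv_of_eqOn_mul_cube_add_div isOpen_Ioi h0 yα_eqOn hu
  have hz3 := eqOn_deriv_deriv_deriv_of_eqOn_mul_cube_add_div isOpen_Ioi h0 zα_eqOn hu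
  have hdiff : (deriv (deriv yα) u) ^ 2 - (deriv (deriv zα) u) ^ 2 = -(1 / u) ^ 2 := by
    rw [hy2, hz2]
    field_simp
    ring
  have hκ : √|(deriv (deriv yα) u) ^ 2 - (deriv (deriv zα) u) ^ 2| = 1 / u := by
    rw [hdiff, abs_neg, abs_sq, sqrt_sq (one_div_pos.2 hu).le]
  refine ⟨hκ, ?_⟩
  rw [hκ, hy2, hz2, hy3, hz3]
  field_simp
  ring
end

section
/- Let τ : ℝ → ℝ be continuous, a ∈ ℝ a constant, and define the spacelike Salkowski curve γ(s) = (s, -a∫₀ˢ∫₀ᵗ sinh(T(u)) du dt, a∫₀ˢ∫₀ᵗ cosh(T(u)) du dt) with T(u) = ∫₀ᵘ τ. Then γ''(s) = (0, -a sinh(T(s)), a cosh(T(s))) and γ'''(s) = (0, -a τ(s) cosh(T(s)), a τ(s) sinh(T(s))); consequently the curvature κ(s) = √|(γ''₂)² − (γ''₃)²| = |a| is constant, and for a > 0 the torsion (γ''₂γ'''₃ − γ'''₂γ''₃)/κ² equals τ(s). -/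
/-! The second derivatives of γ₂, γ₃ are `-a sinh T` and `a cosh T` by the fundamental theorem of
calculus applied twice; differentiating once more brings down `T' = τ`. Both the curvature and the
torsion then reduce, through `cosh² T - sinh² T = 1`, to `|a|` and `τ`. -/

open Real

lemma hasDerivAt_of_eq_primitive {f F : ℝ → ℝ} (hf : Continuous f) {c : ℝ}
    (hF : ∀ u, F u = ∫ v in c..u, f v) (x : ℝ) : HasDerivAt F (f x) x := by
  rw [funext hF]
  exact (hf.integral_hasStrictDerivAt c x).hasDerivAt

lemma deriv_const_mul_primitive {f : ℝ → ℝ} (hf : Continuous f) (k c : ℝ) :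
    deriv (fun s => k * ∫ u in c..s, f u) = fun s => k * f s :=
  funext fun s => ((hf.integral_hasStrictDerivAt c s).hasDerivAt.const_mul k).deriv

lemma deriv_deriv_const_mul_double_primitive {f g : ℝ → ℝ} (hf : Continuous f) {k c : ℝ}
    (hg : ∀ s, g s = k * ∫ t in c..s, ∫ u in c..t, f u) :
    deriv (deriv g) = fun s => k * f s := by
  have hF : Continuous fun t => ∫ u in c..t, f u :=
    intervalIntegral.continuous_primitive (fun _ _ => hf.intervalIntegrable _ _) c
  rw [funext hg, deriv_const_mul_primitive hF, deriv_const_mul_primitive hf]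

lemma sqrt_abs_sq_sinh_sub_sq_cosh (a x : ℝ) :
    √|(-a * sinh x) ^ 2 - (a * cosh x) ^ 2| = |a| := by
  have h : (-a * sinh x) ^ 2 - (a * cosh x) ^ 2 = -a ^ 2 := by
    linear_combination -a ^ 2 * cosh_sq_sub_sinh_sq x
  rw [h, abs_neg, abs_of_nonneg (sq_nonneg a), sqrt_sq_eq_abs]

lemma hyperbolic_torsion_eq {a : ℝ} (ha : a ≠ 0) (t x : ℝ) :
    (-a * sinh x * (a * t * sinh x) - -a * t * cosh x * (a * cosh x)) / |a| ^ 2 = t := by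
  have h : -a * sinh x * (a * t * sinh x) - -a * t * cosh x * (a * cosh x) = a ^ 2 * t := by
    linear_combination a ^ 2 * t * cosh_sq_sub_sinh_sq x
  rw [h, sq_abs]
  field_simp

theorem stmt17 (τ : ℝ → ℝ) (hτ : Continuous τ) (a : ℝ)
    (T : ℝ → ℝ) (hT : ∀ u, T u = ∫ v in (0:ℝ)..u, τ v)
    (γ₂ γ₃ : ℝ → ℝ)
    (hγ₂ : ∀ s, γ₂ s = -a * ∫ t in (0:ℝ)..s, ∫ u in (0:ℝ)..t, Real.sinh (T u))
    (hγ₃ : ∀ s, γ₃ s = a * ∫ t in (0:ℝ)..s, ∫ u in (0:ℝ)..t, Real.cosh (T u))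
    (s : ℝ) :
    deriv (deriv γ₂) s = -a * Real.sinh (T s) ∧
    deriv (deriv γ₃) s = a * Real.cosh (T s) ∧
    deriv (deriv (deriv γ₂)) s = -a * τ s * Real.cosh (T s) ∧
    deriv (deriv (deriv γ₃)) s = a * τ s * Real.sinh (T s) ∧
    Real.sqrt |(deriv (deriv γ₂) s) ^ 2 - (deriv (deriv γ₃) s) ^ 2| = |a| ∧
    (0 < a →
      (deriv (deriv γ₂) s * deriv (deriv (deriv γ₃)) s -
          deriv (deriv (deriv γ₂)) s * deriv (deriv γ₃) s) /
        (Real.sqrt |(deriv (deriv γ₂) s) ^ 2 - (deriv (deriv γ₃) s) ^ 2|) ^ 2 = τ s) := by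
  have hT' := hasDerivAt_of_eq_primitive hτ hT
  have hTc : Continuous T := continuous_iff_continuousAt.2 fun u => (hT' u).continuousAt
  have h₂ : deriv (deriv γ₂) = fun s => -a * sinh (T s) :=
    deriv_deriv_const_mul_double_primitive (continuous_sinh.comp hTc) hγ₂
  have h₃ : deriv (deriv γ₃) = fun s => a * cosh (T s) :=
    deriv_deriv_const_mul_double_primitive (continuous_cosh.comp hTc) hγ₃
  have h₂' : deriv (deriv (deriv γ₂)) s = -a * τ s * cosh (T s) := by
    rw [h₂, ((hT' s).sinh.const_mul (-a)).deriv]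
    ring
  have h₃' : deriv (deriv (deriv γ₃)) s = a * τ s * sinh (T s) := by
    rw [h₃, ((hT' s).cosh.const_mul a).deriv]
    ring
  have hκ : √|(deriv (deriv γ₂) s) ^ 2 - (deriv (deriv γ₃) s) ^ 2| = |a| := by
    rw [h₂, h₃]
    exact sqrt_abs_sq_sinh_sub_sq_cosh a (T s)
  refine ⟨by rw [h₂], by rw [h₃], h₂', h₃', hκ, fun ha => ?_⟩
  rw [hκ, h₂', h₃', h₂, h₃]
  exact hyperbolic_torsion_eq ha.ne' (τ s) (T s)
end
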